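/- arXiv:1912.07679 — 3 statements merged into one kernel-verified Lean document; each statement's English description precedes it below -/
import Mathlib

section
/- Let G be the path graph on vertices x = v_0, v_1, …, v_{n-1}, v_n = y with n ≥ 2. Then in the graph polynomial P(G) = ∏_{i=0}^{n-1}(v_i - v_{i+1}) the coefficient of the monomial x^0·v_1^2·v_2^1·⋯·v_{n-1}^1·y^0 is 1 or -1. -/
open MvPolynomial

/-- The graph polynomial of the path `v_0 v_1 ⋯ v_n`. -/
noncomputable def pathPoly (n : ℕ) : MvPolynomial ℕ ℤ :=
  ∏ i ∈ Finset.range n, (X i - X (i + 1))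

/-- The exponent vector of the monomial `v_0^0 · v_1^2 · v_2^1 ⋯ v_{n-1}^1 · v_n^0`. -/
noncomputable def pathExp (n : ℕ) : ℕ →₀ ℕ :=
  Finsupp.single 1 2 + ∑ i ∈ Finset.Icc 2 (n - 1), Finsupp.single i 1

lemma pathExp_succ (n : ℕ) (hn : 2 ≤ n) :
    pathExp (n + 1) = pathExp n + Finsupp.single n 1 := by
  unfold pathExp
  have h1 : n + 1 - 1 = (n - 1) + 1 := by omega
  rw [h1, Finset.sum_Icc_succ_top (by omega : 2 ≤ (n - 1) + 1)]
  have h2 : n - 1 + 1 = n := by omega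
  rw [h2, add_assoc]

lemma pathExp_apply_big (n : ℕ) (k : ℕ) (hk : n ≤ k) (hn : 2 ≤ n) :
    pathExp n k = 0 := by
  unfold pathExp
  rw [Finsupp.add_apply, Finsupp.single_apply, Finset.sum_apply']
  rw [if_neg (by omega)]
  simp only [Finsupp.single_apply]
  rw [Finset.sum_eq_zero, add_zero]
  intro i hi
  simp only [Finset.mem_Icc] at hi
  rw [if_neg (by omega)]

lemma key (n : ℕ) (hn : 2 ≤ n) : coeff (pathExp n) (pathPoly n) = -1 := by
  induction n, hn using Nat.le_induction with
  | base =>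
    have he : pathExp 2 = Finsupp.single 1 1 + Finsupp.single 1 1 := by
      unfold pathExp
      rw [show (2:ℕ) - 1 = 1 from rfl, show Finset.Icc 2 1 = ∅ from rfl,
        Finset.sum_empty, add_zero, ← Finsupp.single_add]
    have hp : pathPoly 2 = (X 0 - X 1) * X 1 - (X 0 - X 1) * X 2 := by
      unfold pathPoly
      rw [Finset.prod_range_succ, Finset.prod_range_one, mul_sub]
    rw [he, hp, coeff_sub, coeff_mul_X, coeff_mul_X' ]
    rw [if_neg (by simp [Finsupp.single_apply])]
    simp [coeff_sub, coeff_X', Finsupp.single_eq_single_iff]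
  | succ n hn ih =>
    rw [pathExp_succ n hn]
    have hp : pathPoly (n + 1) = pathPoly n * X n - pathPoly n * X (n + 1) := by
      unfold pathPoly
      rw [Finset.prod_range_succ, mul_sub]
    rw [hp, coeff_sub, coeff_mul_X, coeff_mul_X']
    rw [if_neg (by
      simp only [Finsupp.mem_support_iff, Finsupp.add_apply, Finsupp.single_apply,
        if_neg (by omega : ¬ n = n + 1), add_zero, ne_eq, not_not]
      exact pathExp_apply_big n (n + 1) (by omega) hn)]
    rw [sub_zero, ih]

theorem stmt_4 (n : ℕ) (hn : 2 ≤ n) :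
    coeff (pathExp n) (pathPoly n) = 1 ∨ coeff (pathExp n) (pathPoly n) = -1 := by
  right
  exact key n hn
end

section
/- Let G be a graph and suppose the graph polynomial P(G) = ∏_{uv∈E, u<v}(u - v) over ℤ has a nonzero coefficient on a monomial ∏_{v∈V} v^{α_v}. Then for any assignment of lists L(v) of colours (subsets of ℤ) with |L(v)| ≥ α_v + 1 for all v, there exists a proper colouring c of G with c(v) ∈ L(v) for all v. -/
open MvPolynomial

/-!
The polynomial `P(G)` is homogeneous, so a monomial with nonzero coefficient has degree equal to
`deg P(G)`. Alon's Combinatorial Nullstellensatz then gives a point `c` of `∏ L v` with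
`P(G)(c) ≠ 0`, and `P(G)(c) = ∏ (c u - c v)` is nonzero exactly when `c` is proper.
-/

/-- The graph polynomial `∏_{uv ∈ E, u < v} (u - v)` of a finite graph with linearly
ordered vertices. -/
noncomputable def graphPoly {V : Type*} [Fintype V] [LinearOrder V]
    (G : SimpleGraph V) [DecidableRel G.Adj] : MvPolynomial V ℤ :=
  ∏ p ∈ Finset.univ.filter (fun p : V × V => p.1 < p.2 ∧ G.Adj p.1 p.2),
    (X p.1 - X p.2)

namespace MvPolynomial.IsHomogeneous

variable {σ R : Type*} [CommSemiring R] {φ : MvPolynomial σ R} {n : ℕ}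

theorem totalDegree_eq_degree_of_coeff_ne_zero (hφ : φ.IsHomogeneous n) {d : σ →₀ ℕ}
    (hd : coeff d φ ≠ 0) : φ.totalDegree = d.degree := by
  rw [hφ.totalDegree (ne_zero_iff.mpr ⟨d, hd⟩), Finsupp.degree_eq_weight_one]
  exact (hφ hd).symm

end MvPolynomial.IsHomogeneous

section GraphPoly

variable {V : Type*} [Fintype V] [LinearOrder V] (G : SimpleGraph V) [DecidableRel G.Adj]

theorem isHomogeneous_graphPoly :
    (graphPoly G).IsHomogeneous
      (Finset.univ.filter fun p : V × V => p.1 < p.2 ∧ G.Adj p.1 p.2).card := by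
  simpa [graphPoly] using IsHomogeneous.prod _ _ (fun _ => 1)
    fun p _ => (isHomogeneous_X ℤ p.1).sub (isHomogeneous_X ℤ p.2)

theorem eval_graphPoly_ne_zero_iff (c : V → ℤ) :
    eval c (graphPoly G) ≠ 0 ↔ ∀ u v, G.Adj u v → c u ≠ c v := by
  simp only [graphPoly, map_prod, Finset.prod_ne_zero_iff, Finset.mem_filter,
    Finset.mem_univ, true_and, eval_sub, eval_X, sub_ne_zero, Prod.forall]
  refine ⟨fun h u v huv => ?_, fun h u v ⟨_, huv⟩ => h u v huv⟩
  rcases lt_or_gt_of_ne (G.ne_of_adj huv) with hlt | hgt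
  · exact h u v ⟨hlt, huv⟩
  · exact (h v u ⟨hgt, huv.symm⟩).symm

end GraphPoly

/-- Combinatorial Nullstellensatz for the graph polynomial: if the monomial with
exponent vector `d` has nonzero coefficient in `P(G)`, then for any lists
`L v ⊆ ℤ` with `|L v| ≥ d v + 1` there is a proper colouring of `G` from the lists. -/
theorem stmt_12 {V : Type*} [Fintype V] [LinearOrder V]
    (G : SimpleGraph V) [DecidableRel G.Adj]
    (d : V →₀ ℕ) (hd : coeff d (graphPoly G) ≠ 0)
    (L : V → Finset ℤ) (hL : ∀ v, d v + 1 ≤ (L v).card) :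
    ∃ c : V → ℤ, (∀ v, c v ∈ L v) ∧ ∀ u v, G.Adj u v → c u ≠ c v := by
  obtain ⟨c, hcL, hc⟩ := combinatorial_nullstellensatz_exists_eval_nonzero (graphPoly G) d hd
    ((isHomogeneous_graphPoly G).totalDegree_eq_degree_of_coeff_ne_zero hd) L hL
  exact ⟨c, hcL, (eval_graphPoly_ne_zero_iff G c).mp hc⟩
end

section
/- Let G be a graph that is the union of two subgraphs G_1 and G_2 sharing exactly two vertices a and b and the edge ab, with V(G_1) ∩ V(G_2) = {a, b}, and suppose all edges of G belong to exactly one of G_1 or G_2 − ab together with ab ∈ E(G_1). Then P(G) = P(G_1)·P(G_2 − ab), and if P(G_2 − ab) contains a monomial s_2 = η_2·a^0·b^0·∏_{v ∈ V(G_2)∖{a,b}} v^{α_v} with nonzero coefficient, then for any exponent pattern on V(G_1): the monomial s_1 occurs in P(G_1) with nonzero coefficient if and only if s_1·s_2 occurs in P(G) with nonzero coefficient. -/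
/-!
`P(G) = P(G₁) P(H)` because the edge set of `G` is the disjoint union of those of `G₁` and
`H`. If monomials `e` of `P(G₁)` and `f` of `P(H)` satisfy `e + f = d₁ + d₂`, then `f` agrees
with `d₂` off `s₁`, where `e` and `d₁` vanish, while `d₂` vanishes on `s₁`, since it lives on
`s₂` and avoids `s₁ ∩ s₂ = {a, b}`. Hence `d₂ ≤ f`; homogeneity of `P(H)` gives
`deg f = deg d₂`, so `f = d₂` and `e = d₁`. Thus the coefficient of `d₁ + d₂` in `P(G)` is
`coeff d₁ P(G₁) · coeff d₂ P(H)`, with the second factor nonzero.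
-/

open MvPolynomial

open scoped Classical in
/-- The graph polynomial `∏_{uv ∈ E, u < v} (u - v)` of a graph on `ℕ` whose edges
lie inside the finite vertex set `s`. -/
noncomputable def graphPolyOn (s : Finset ℕ) (G : SimpleGraph ℕ) : MvPolynomial ℕ ℤ :=
  ∏ p ∈ (s ×ˢ s).filter (fun p : ℕ × ℕ => p.1 < p.2 ∧ G.Adj p.1 p.2),
    (X p.1 - X p.2)

namespace Finsupp

variable {σ : Type*}

theorem eq_of_le_of_degree_eq {d f : σ →₀ ℕ} (hle : d ≤ f) (hdeg : f.degree = d.degree) :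
    f = d := by
  obtain ⟨g, rfl⟩ := exists_add_of_le hle
  rw [map_add, add_eq_left, degree_eq_zero_iff] at hdeg
  rw [hdeg, add_zero]

end Finsupp

namespace MvPolynomial

variable {σ R : Type*} [CommSemiring R]

theorem support_subset_of_mem_supported {P : MvPolynomial σ R} {S : Set σ}
    (hP : P ∈ supported R S) {d : σ →₀ ℕ} (hd : coeff d P ≠ 0) : ↑d.support ⊆ S :=
  fun _ hv ↦
    mem_supported.1 hP <| (mem_vars_iff_mem_support _).2 ⟨d, mem_support_iff.2 hd, hv⟩

theorem IsHomogeneous.degree_eq_of_coeff_ne_zero {Q : MvPolynomial σ R} {n : ℕ}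
    (hQ : Q.IsHomogeneous n) {d : σ →₀ ℕ} (hd : coeff d Q ≠ 0) : d.degree = n :=
  not_not.1 fun h ↦ hd (hQ.coeff_eq_zero h)

theorem coeff_add_mul_of_supported {P Q : MvPolynomial σ R} {S : Set σ} {n : ℕ}
    (hP : P ∈ supported R S) (hQ : Q.IsHomogeneous n) {d₁ d₂ : σ →₀ ℕ}
    (hd₁ : ↑d₁.support ⊆ S) (hd₂ : ∀ v ∈ S, d₂ v = 0) (hd₂n : d₂.degree = n) :
    coeff (d₁ + d₂) (P * Q) = coeff d₁ P * coeff d₂ Q := by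
  classical
  open Finset.HasAntidiagonal in
  rw [coeff_mul]
  refine Finset.sum_eq_single_of_mem (d₁, d₂) (mem_antidiagonal.2 rfl) ?_
  rintro ⟨e, f⟩ hef hne
  rw [mem_antidiagonal] at hef
  by_contra hprod
  have he := support_subset_of_mem_supported hP (left_ne_zero_of_mul hprod)
  have hf := hQ.degree_eq_of_coeff_ne_zero (right_ne_zero_of_mul hprod)
  have hd₂f : d₂ ≤ f := fun v ↦ by
    by_cases hv : v ∈ S
    · simp [hd₂ v hv]
    · have hev : e v = 0 := Finsupp.notMem_support_iff.1 fun h ↦ hv (he h)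
      have hd₁v : d₁ v = 0 := Finsupp.notMem_support_iff.1 fun h ↦ hv (hd₁ h)
      have := DFunLike.congr_fun hef v
      simp only [Finsupp.add_apply, hev, hd₁v, zero_add] at this
      exact this.ge
  have hfd₂ : f = d₂ := Finsupp.eq_of_le_of_degree_eq hd₂f (hf.trans hd₂n.symm)
  subst hfd₂
  exact hne (Prod.ext (add_right_cancel hef) rfl)

end MvPolynomial

section GraphPolynomial

variable (s : Finset ℕ) (G : SimpleGraph ℕ)

theorem graphPolyOn_mem_supported : graphPolyOn s G ∈ supported ℤ (s : Set ℕ) :=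
  Subalgebra.prod_mem _ fun p hp ↦ by
    simp only [Finset.mem_filter, Finset.mem_product] at hp
    exact sub_mem (X_mem_supported.2 hp.1.1) (X_mem_supported.2 hp.1.2)

open scoped Classical in
theorem isHomogeneous_graphPolyOn :
    (graphPolyOn s G).IsHomogeneous
      ((s ×ˢ s).filter (fun p : ℕ × ℕ ↦ p.1 < p.2 ∧ G.Adj p.1 p.2)).card := by
  simpa [graphPolyOn] using
    IsHomogeneous.prod _ (fun p : ℕ × ℕ ↦ (X p.1 - X p.2 : MvPolynomial ℕ ℤ)) (fun _ ↦ 1)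
      fun _ _ ↦ (isHomogeneous_X _ _).sub (isHomogeneous_X _ _)

theorem graphPolyOn_union {G₁ H : SimpleGraph ℕ} {s₁ s₂ : Finset ℕ}
    (hG₁ : ∀ u v, G₁.Adj u v → u ∈ s₁ ∧ v ∈ s₁) (hH : ∀ u v, H.Adj u v → u ∈ s₂ ∧ v ∈ s₂)
    (hdisj : ∀ u v, ¬ (G₁.Adj u v ∧ H.Adj u v))
    (hG : ∀ u v, G.Adj u v ↔ G₁.Adj u v ∨ H.Adj u v) :
    graphPolyOn (s₁ ∪ s₂) G = graphPolyOn s₁ G₁ * graphPolyOn s₂ H := by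
  unfold graphPolyOn
  rw [← Finset.prod_union]
  · refine Finset.prod_congr (Finset.ext fun p ↦ ?_) fun _ _ ↦ rfl
    simp only [Finset.mem_union, Finset.mem_filter, Finset.mem_product, hG]
    have := hG₁ p.1 p.2
    have := hH p.1 p.2
    tauto
  · refine Finset.disjoint_left.2 fun p hp₁ hp₂ ↦ ?_
    simp only [Finset.mem_filter] at hp₁ hp₂
    exact hdisj p.1 p.2 ⟨hp₁.2.2, hp₂.2.2⟩

end GraphPolynomial

theorem stmt_14_general (G G1 H : SimpleGraph ℕ) (s1 s2 : Finset ℕ) (a b : ℕ)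
    (hinter : s1 ∩ s2 = {a, b})
    (hG1s : ∀ u v, G1.Adj u v → u ∈ s1 ∧ v ∈ s1)
    (hHs : ∀ u v, H.Adj u v → u ∈ s2 ∧ v ∈ s2)
    (hdisj : ∀ u v, ¬ (G1.Adj u v ∧ H.Adj u v))
    (hG : ∀ u v, G.Adj u v ↔ G1.Adj u v ∨ H.Adj u v)
    (d2 : ℕ →₀ ℕ) (hd2a : d2 a = 0) (hd2b : d2 b = 0)
    (hd2 : coeff d2 (graphPolyOn s2 H) ≠ 0) :
    graphPolyOn (s1 ∪ s2) G = graphPolyOn s1 G1 * graphPolyOn s2 H ∧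
    ∀ d1 : ℕ →₀ ℕ, (∀ v, d1 v ≠ 0 → v ∈ s1) →
      (coeff d1 (graphPolyOn s1 G1) ≠ 0 ↔
        coeff (d1 + d2) (graphPolyOn (s1 ∪ s2) G) ≠ 0) := by
  have hsplit := graphPolyOn_union G hG1s hHs hdisj hG
  refine ⟨hsplit, fun d1 hd1 ↦ ?_⟩
  have hd2s1 : ∀ v ∈ (s1 : Set ℕ), d2 v = 0 := fun v hv1 ↦ by
    by_contra hv
    have hv2 : v ∈ s2 := support_subset_of_mem_supported (graphPolyOn_mem_supported s2 H) hd2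
      (Finsupp.mem_support_iff.2 hv)
    have : v ∈ s1 ∩ s2 := Finset.mem_inter.2 ⟨hv1, hv2⟩
    rw [hinter, Finset.mem_insert, Finset.mem_singleton] at this
    rcases this with rfl | rfl <;> contradiction
  have hd2deg := (isHomogeneous_graphPolyOn s2 H).degree_eq_of_coeff_ne_zero hd2
  rw [hsplit, coeff_add_mul_of_supported (graphPolyOn_mem_supported s1 G1)
    (isHomogeneous_graphPolyOn s2 H) (fun v hv ↦ hd1 v (Finsupp.mem_support_iff.1 hv)) hd2s1
    hd2deg]
  exact (mul_ne_zero_iff_right hd2).symm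

/-- `G` is the union of `G₁` (with vertex set `s₁`, containing the edge `ab`) and
`H = G₂ − ab` (with vertex set `s₂`), where `s₁ ∩ s₂ = {a, b}` and every edge of `G`
lies in exactly one of `G₁`, `H`.  Then `P(G) = P(G₁)·P(G₂ − ab)`, and if
`P(G₂ − ab)` contains a monomial `s₂ = η₂·a^0·b^0·∏_{v∉{a,b}} v^{α_v}` with nonzero
coefficient, then for every exponent pattern `d₁` on the vertices of `G₁`, the
monomial `d₁` occurs in `P(G₁)` iff the monomial `d₁·d₂` occurs in `P(G)`. -/
theorem stmt_14 (G G1 H : SimpleGraph ℕ) (s1 s2 : Finset ℕ) (a b : ℕ)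
    (hab : a ≠ b) (hmem : a ∈ s1 ∧ b ∈ s1 ∧ a ∈ s2 ∧ b ∈ s2)
    (hinter : s1 ∩ s2 = {a, b})
    (hG1s : ∀ u v, G1.Adj u v → u ∈ s1 ∧ v ∈ s1)
    (hHs : ∀ u v, H.Adj u v → u ∈ s2 ∧ v ∈ s2)
    (hG1ab : G1.Adj a b) (hHab : ¬ H.Adj a b)
    (hdisj : ∀ u v, ¬ (G1.Adj u v ∧ H.Adj u v))
    (hG : ∀ u v, G.Adj u v ↔ G1.Adj u v ∨ H.Adj u v)
    (d2 : ℕ →₀ ℕ) (hd2a : d2 a = 0) (hd2b : d2 b = 0)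
    (hd2supp : ∀ v, d2 v ≠ 0 → v ∈ s2)
    (hd2 : coeff d2 (graphPolyOn s2 H) ≠ 0) :
    graphPolyOn (s1 ∪ s2) G = graphPolyOn s1 G1 * graphPolyOn s2 H ∧
    ∀ d1 : ℕ →₀ ℕ, (∀ v, d1 v ≠ 0 → v ∈ s1) →
      (coeff d1 (graphPolyOn s1 G1) ≠ 0 ↔
        coeff (d1 + d2) (graphPolyOn (s1 ∪ s2) G) ≠ 0) :=
  stmt_14_general G G1 H s1 s2 a b hinter hG1s hHs hdisj hG d2 hd2a hd2b hd2
end
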